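/- arXiv:1509.00646 — 7 statements merged into one kernel-verified Lean document; each statement's English description precedes it below -/
import Mathlib

section
/- Suppose λ1 ∈ ℂ satisfies λ1 ≠ n for every natural number n (λ1 is not a nonnegative integer), and let λ2 ∈ ℂ be arbitrary. Then every ℂ-linear subspace of R that contains the constant polynomial 1 and is invariant under each of the eight operators E1, E2, E12, F1, F2, F12, H1, H2 is equal to all of R; i.e., the s1-twisted Verma module M^{s1}(λ) is generated by the single vector 1. -/
open MvPolynomial LieAlgebra.SpecialLinear

noncomputable section

/-- The polynomial algebra `R = ℂ[x,ξ2,ξ3]`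
(variable `x` has index `0`, `ξ2` index `1`, `ξ3` index `2`). -/
abbrev R3 : Type := MvPolynomial (Fin 3) ℂ

/-- Multiplication by the `i`-th variable as a `ℂ`-linear endomorphism of `R`
(`ξ 0` is multiplication by `x`, `ξ 1` by `ξ2`, `ξ 2` by `ξ3`). -/
def ξ (i : Fin 3) : Module.End ℂ R3 := LinearMap.mulLeft ℂ (X i)

/-- The partial derivative with respect to the `i`-th variable as a `ℂ`-linear endomorphism
of `R` (`D 0 = ∂x`, `D 1 = ∂2`, `D 2 = ∂3`). -/
def D (i : Fin 3) : Module.End ℂ R3 := (pderiv i).toLinearMap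

/-- `F1 = ξ2∂3 − x(x∂x − (1/2)ξ3∂3 − λ1) − (1/2)x(ξ2 − (1/2)xξ3)∂2`. -/
def F1 (lam1 : ℂ) : Module.End ℂ R3 :=
  ξ 1 * D 2 - ξ 0 * (ξ 0 * D 0 - (1/2 : ℂ) • (ξ 2 * D 2) - lam1 • 1)
    - (1/2 : ℂ) • (ξ 0 * (ξ 1 - (1/2 : ℂ) • (ξ 0 * ξ 2)) * D 1)

/-- `F2` is multiplication by `ξ3`. -/
def F2 : Module.End ℂ R3 := ξ 2

/-- `F12` is multiplication by `−ξ2 − (1/2)xξ3`. -/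
def F12 : Module.End ℂ R3 := -ξ 1 - (1/2 : ℂ) • (ξ 0 * ξ 2)

/-- `E1 = ∂x + (1/2)ξ3∂2`. -/
def E1 : Module.End ℂ R3 := D 0 + (1/2 : ℂ) • (ξ 2 * D 1)

/-- `E2 = (x∂x − ξ2∂2 − ξ3∂3 + λ2)∂3
      + (1/2)x(x∂x + ξ2∂2 − (1/2)xξ3∂2 − 2λ1 − λ2 − 1)∂2`. -/
def E2 (lam1 lam2 : ℂ) : Module.End ℂ R3 :=
  (ξ 0 * D 0 - ξ 1 * D 1 - ξ 2 * D 2 + lam2 • 1) * D 2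
    + (1/2 : ℂ) • (ξ 0 * (ξ 0 * D 0 + ξ 1 * D 1 - (1/2 : ℂ) • (ξ 0 * ξ 2 * D 1)
        - (2 * lam1 + lam2 + 1) • 1) * D 1)

/-- `E12 = ∂x∂3 + (ξ2∂2 + (1/2)ξ3∂3 − λ1 − λ2 − 1/2)∂2 + (1/2)x(∂x − (1/2)ξ3∂2)∂2`. -/
def E12 (lam1 lam2 : ℂ) : Module.End ℂ R3 :=
  D 0 * D 2 + (ξ 1 * D 1 + (1/2 : ℂ) • (ξ 2 * D 2) - (lam1 + lam2 + 1/2) • 1) * D 1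
    + (1/2 : ℂ) • (ξ 0 * (D 0 - (1/2 : ℂ) • (ξ 2 * D 1)) * D 1)

/-- `H1 = −2x∂x − ξ2∂2 + ξ3∂3 + λ1`. -/
def H1 (lam1 : ℂ) : Module.End ℂ R3 :=
  (-2 : ℂ) • (ξ 0 * D 0) - ξ 1 * D 1 + ξ 2 * D 2 + lam1 • 1

/-- `H2 = x∂x − ξ2∂2 − 2ξ3∂3 + λ2`. -/
def H2 (lam2 : ℂ) : Module.End ℂ R3 :=
  ξ 0 * D 0 - ξ 1 * D 1 + (-2 : ℂ) • (ξ 2 * D 2) + lam2 • 1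


lemma F1_X_pow (lam1 : ℂ) (n : ℕ) :
    F1 lam1 (X 0 ^ n : R3) = (lam1 - n) • X 0 ^ (n + 1) := by
  cases n with
  | zero => simp [F1, ξ, D, Module.End.mul_apply]
  | succ m =>
    simp [F1, ξ, D, Module.End.mul_apply, pderiv_pow, pderiv_X, Pi.single_apply,
      smul_eq_C_mul]
    ring

lemma F2_apply (v : R3) : F2 v = X 2 * v := rfl

lemma F12_apply (v : R3) : F12 v = -(X 1 * v) - (1/2 : ℂ) • (X 0 * (X 2 * v)) := by
  simp [F12, ξ, Module.End.mul_apply]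

/-- If `λ1` is not a nonnegative integer, the `s1`-twisted Verma module `M^{s1}(λ)` is
generated by the single vector `1`: every `ℂ`-subspace of `R = ℂ[x,ξ2,ξ3]` containing `1`
and invariant under the eight operators `E1, E2, E12, F1, F2, F12, H1, H2` is all of `R`. -/
theorem s1_twisted_generated_by_one (lam1 lam2 : ℂ) (h : ∀ n : ℕ, lam1 ≠ (n : ℂ)) :
    ∀ p : Submodule ℂ R3, (1 : R3) ∈ p →
      (∀ v ∈ p, E1 v ∈ p) →
      (∀ v ∈ p, E2 lam1 lam2 v ∈ p) →
      (∀ v ∈ p, E12 lam1 lam2 v ∈ p) →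
      (∀ v ∈ p, F1 lam1 v ∈ p) →
      (∀ v ∈ p, F2 v ∈ p) →
      (∀ v ∈ p, F12 v ∈ p) →
      (∀ v ∈ p, H1 lam1 v ∈ p) →
      (∀ v ∈ p, H2 lam2 v ∈ p) →
      p = ⊤ := by
  intro p h1 hE1 hE2 hE12 hF1 hF2 hF12 hH1 hH2
  have hx : ∀ n : ℕ, ((X 0 : R3) ^ n) ∈ p := by
    intro n
    induction n with
    | zero => simpa using h1
    | succ m ih =>
      have hm := hF1 _ ih
      rw [F1_X_pow] at hm
      have hne : lam1 - (m : ℂ) ≠ 0 := sub_ne_zero.2 (h m)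
      have := p.smul_mem (lam1 - (m : ℂ))⁻¹ hm
      rwa [smul_smul, inv_mul_cancel₀ hne, one_smul] at this
  have hxz : ∀ c a : ℕ, ((X 0 : R3) ^ a * X 2 ^ c) ∈ p := by
    intro c
    induction c with
    | zero => intro a; simpa using hx a
    | succ m ih =>
      intro a
      have hm := hF2 _ (ih a)
      rw [F2_apply] at hm
      have : (X 0 : R3) ^ a * X 2 ^ (m + 1) = X 2 * (X 0 ^ a * X 2 ^ m) := by ring
      rwa [this]
  have hmon : ∀ b a c : ℕ, ((X 0 : R3) ^ a * X 1 ^ b * X 2 ^ c) ∈ p := by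
    intro b
    induction b with
    | zero => intro a c; simpa using hxz c a
    | succ m ih =>
      intro a c
      have hm := hF12 _ (ih a c)
      rw [F12_apply] at hm
      have h3 := ih (a + 1) (c + 1)
      have key : (X 0 : R3) ^ a * X 1 ^ (m + 1) * X 2 ^ c =
          -(-(X 1 * (X 0 ^ a * X 1 ^ m * X 2 ^ c))
            - (1/2 : ℂ) • (X 0 * (X 2 * (X 0 ^ a * X 1 ^ m * X 2 ^ c))))
          - (1/2 : ℂ) • (X 0 ^ (a + 1) * X 1 ^ m * X 2 ^ (c + 1)) := by
        simp only [smul_eq_C_mul]; ring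
      rw [key]
      exact p.sub_mem (p.neg_mem hm) (p.smul_mem _ h3)
  rw [eq_top_iff]
  intro q _
  rw [q.as_sum]
  refine p.sum_mem fun v _ => ?_
  have h1' : Finsupp.single (0 : Fin 3) (v 0) + Finsupp.single 1 (v 1)
      + Finsupp.single 2 (v 2) = v := by
    ext i; fin_cases i <;> simp [Finsupp.single_apply]
  have h2 : (X 0 : R3) ^ (v 0) * X 1 ^ (v 1) * X 2 ^ (v 2) = monomial v 1 := by
    rw [X_pow_eq_monomial, X_pow_eq_monomial, X_pow_eq_monomial, monomial_mul, monomial_mul]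
    rw [h1']; ring_nf
  have h3 : (monomial v (coeff v q) : R3) = coeff v q • monomial v 1 := by
    rw [smul_monomial]; simp
  rw [h3, ← h2]
  exact p.smul_mem _ (hmon _ _ _)
end
end

section
/- For all λ1, λ2 ∈ ℂ and every natural number k, the k-th iterate of F1 applied to the constant polynomial 1 satisfies F1^k(1) = (∏_{i=0}^{k−1} (λ1 − i))·x^k, i.e., F1^k(1) equals k!·binom(λ1, k)·x^k with the generalized binomial coefficient binom(λ1,k) = λ1(λ1−1)⋯(λ1−k+1)/k!. -/
open MvPolynomial LieAlgebra.SpecialLinear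

noncomputable section

lemma F1_X0_pow (lam1 : ℂ) (k : ℕ) :
    F1 lam1 ((X 0 : R3) ^ k) = (lam1 - k) • X 0 ^ (k + 1) := by
  have h1 : pderiv (1 : Fin 3) ((X 0 : R3) ^ k) = 0 := by
    rw [pderiv_pow, pderiv_X_of_ne (by decide)]; ring
  have h2 : pderiv (2 : Fin 3) ((X 0 : R3) ^ k) = 0 := by
    rw [pderiv_pow, pderiv_X_of_ne (by decide)]; ring
  have hx : (X 0 : R3) ^ 2 * pderiv 0 ((X 0 : R3) ^ k) = C (k : ℂ) * X 0 ^ (k + 1) := by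
    rw [pderiv_pow, pderiv_X_self]
    cases k with
    | zero => simp
    | succ m =>
      rw [show m + 1 - 1 = m from rfl]
      push_cast
      rw [map_add, map_one, MvPolynomial.C_eq_coe_nat]
      ring
  simp only [F1, ξ, D, LinearMap.sub_apply, Module.End.mul_apply, LinearMap.smul_apply,
    LinearMap.mulLeft_apply, Derivation.coeFn_coe, Module.End.one_apply, h1, h2,
    mul_zero, smul_zero, sub_zero, zero_sub, smul_neg, sub_neg_eq_add]
  rw [sub_smul, MvPolynomial.smul_eq_C_mul, MvPolynomial.smul_eq_C_mul,
    MvPolynomial.smul_eq_C_mul]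
  linear_combination -hx
/-- In the `s1`-twisted Verma module `M^{s1}(λ)` we have
`F1^k(1) = (∏_{i=0}^{k−1} (λ1 − i))·x^k = k!·binom(λ1,k)·x^k`,
where `binom(λ1,k)` is the generalized binomial coefficient. -/
theorem F1_pow_apply_one (lam1 lam2 : ℂ) (k : ℕ) :
    (F1 lam1 ^ k) (1 : R3) =
      (∏ i ∈ Finset.range k, (lam1 - (i : ℂ))) • X 0 ^ k := by
  induction k with
  | zero => simp
  | succ n ih =>
    rw [pow_succ', Module.End.mul_apply, ih, map_smul, F1_X0_pow,
      Finset.prod_range_succ, smul_smul, mul_comm]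
end
end

section
/- Suppose λ1 = n for a natural number n (cast to ℂ in the operators) and λ2 ∈ ℂ. Then: (a) for every natural number k with k ≤ n+1, E1^k(x^{n+1}) = (∏_{i=0}^{k−1} (n+1−i))·x^{n+1−k} = k!·binom(n+1, k)·x^{n+1−k}; and (b) for every natural number k, F1^k(x^{n+1}) = (−1)^k·k!·x^{n+1+k}. -/
open MvPolynomial LieAlgebra.SpecialLinear

noncomputable section

/-! On powers of `x` the operators act as a scalar times a shift of degree, `E1 xᵐ = m xᵐ⁻¹` and
`F1 xᵐ = (λ1 − m) xᵐ⁺¹`, because `∂2` and `∂3` kill `xᵐ`. Iterating gives a descending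
factorial, resp. the descending Pochhammer symbol at `λ1 − m`; for `λ1 = n`, `m = n + 1` this is
its value at `−1`, namely `(−1)ᵏ k!`. -/

theorem MvPolynomial.pderiv_X_pow_of_ne {σ R : Type*} [CommSemiring R] {i j : σ} (h : j ≠ i)
    (m : ℕ) : pderiv i (X j ^ m : MvPolynomial σ R) = 0 := by
  rw [pderiv_pow, pderiv_X_of_ne h, mul_zero]

theorem MvPolynomial.X_mul_pderiv_X_pow {σ R : Type*} [CommSemiring R] (i : σ) (m : ℕ) :
    X i * pderiv i (X i ^ m : MvPolynomial σ R) = m • X i ^ m := by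
  cases m with
  | zero => simp
  | succ m => rw [pderiv_pow, pderiv_X_self, Nat.add_sub_cancel, nsmul_eq_mul]; ring

theorem descPochhammer_eval_neg_one (S : Type*) [CommRing S] (k : ℕ) :
    (descPochhammer S k).eval (-1) = (-1) ^ k * (k.factorial : S) := by
  have h := ascPochhammer_eval_neg_eq_descPochhammer S (-1) k
  rw [neg_neg, ascPochhammer_eval_one] at h
  rw [h, ← mul_assoc, ← mul_pow, neg_one_mul, neg_neg, one_pow, one_mul]

theorem E1_apply_X_zero_pow (m : ℕ) : E1 (X 0 ^ m : R3) = (m : ℂ) • X 0 ^ (m - 1) := by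
  simp only [E1, D, ξ, LinearMap.add_apply, LinearMap.smul_apply, Module.End.mul_apply,
    LinearMap.mulLeft_apply, Derivation.coeFn_coe, pderiv_pow, pderiv_X_self, mul_one,
    pderiv_X_pow_of_ne (show (0 : Fin 3) ≠ 1 by decide), mul_zero, smul_zero, add_zero]
  rw [Nat.cast_smul_eq_nsmul, nsmul_eq_mul]

theorem F1_apply_X_zero_pow (c : ℂ) (m : ℕ) :
    F1 c (X 0 ^ m : R3) = (c - m) • X 0 ^ (m + 1) := by
  simp only [F1, D, ξ, LinearMap.sub_apply, LinearMap.smul_apply, Module.End.mul_apply,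
    LinearMap.mulLeft_apply, Derivation.coeFn_coe, Module.End.one_apply, X_mul_pderiv_X_pow,
    pderiv_X_pow_of_ne (show (0 : Fin 3) ≠ 1 by decide),
    pderiv_X_pow_of_ne (show (0 : Fin 3) ≠ 2 by decide), mul_zero, smul_zero, sub_zero, zero_sub]
  rw [← Nat.cast_smul_eq_nsmul ℂ, ← sub_smul, mul_smul_comm, ← pow_succ', ← neg_smul, neg_sub]

theorem E1_pow_apply_X_zero_pow (m k : ℕ) :
    (E1 ^ k) (X 0 ^ m : R3) = (m.descFactorial k : ℂ) • X 0 ^ (m - k) := by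
  induction k with
  | zero => simp
  | succ k ih =>
    rw [pow_succ', Module.End.mul_apply, ih, map_smul, E1_apply_X_zero_pow, smul_smul,
      Nat.descFactorial_succ, Nat.sub_sub, Nat.cast_mul, mul_comm]

theorem F1_pow_apply_X_zero_pow (c : ℂ) (m k : ℕ) :
    (F1 c ^ k) (X 0 ^ m : R3) = (descPochhammer ℂ k).eval (c - m) • X 0 ^ (m + k) := by
  induction k with
  | zero => simp
  | succ k ih =>
    rw [pow_succ', Module.End.mul_apply, ih, map_smul, F1_apply_X_zero_pow, smul_smul,
      descPochhammer_succ_eval, ← add_assoc, Nat.cast_add, sub_sub]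

theorem E1_F1_pow_apply_xpow_general (n : ℕ) :
    (∀ k : ℕ, k ≤ n + 1 →
      (E1 ^ k) (X 0 ^ (n + 1) : R3) =
          (∏ i ∈ Finset.range k, ((n : ℂ) + 1 - (i : ℂ))) • X 0 ^ (n + 1 - k) ∧
      (E1 ^ k) (X 0 ^ (n + 1) : R3) =
          ((k.factorial : ℂ) * ((n + 1).choose k : ℂ)) • X 0 ^ (n + 1 - k)) ∧
    (∀ k : ℕ,
      (F1 (n : ℂ) ^ k) (X 0 ^ (n + 1) : R3) =
        ((-1 : ℂ) ^ k * (k.factorial : ℂ)) • X 0 ^ (n + 1 + k)) := by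
  refine ⟨fun k _ => ⟨?_, ?_⟩, fun k => ?_⟩
  · rw [E1_pow_apply_X_zero_pow, ← descPochhammer_eval_eq_descFactorial,
      descPochhammer_eval_eq_prod_range, Nat.cast_add_one]
  · rw [E1_pow_apply_X_zero_pow, Nat.descFactorial_eq_factorial_mul_choose, Nat.cast_mul]
  · rw [F1_pow_apply_X_zero_pow, Nat.cast_add_one, sub_add_cancel_left,
      descPochhammer_eval_neg_one]

/-- In the `s1`-twisted Verma module `M^{s1}(λ)` with `λ1 = n ∈ ℕ`:
(a) for `k ≤ n+1`, `E1^k(x^{n+1}) = (∏_{i=0}^{k−1}(n+1−i))·x^{n+1−k} = k!·C(n+1,k)·x^{n+1−k}`;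
(b) for every `k`, `F1^k(x^{n+1}) = (−1)^k·k!·x^{n+1+k}`. -/
theorem E1_F1_pow_apply_xpow (n : ℕ) (lam2 : ℂ) :
    (∀ k : ℕ, k ≤ n + 1 →
      (E1 ^ k) (X 0 ^ (n + 1) : R3) =
          (∏ i ∈ Finset.range k, ((n : ℂ) + 1 - (i : ℂ))) • X 0 ^ (n + 1 - k) ∧
      (E1 ^ k) (X 0 ^ (n + 1) : R3) =
          ((k.factorial : ℂ) * ((n + 1).choose k : ℂ)) • X 0 ^ (n + 1 - k)) ∧
    (∀ k : ℕ,
      (F1 (n : ℂ) ^ k) (X 0 ^ (n + 1) : R3) =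
        ((-1 : ℂ) ^ k * (k.factorial : ℂ)) • X 0 ^ (n + 1 + k)) :=
  E1_F1_pow_apply_xpow_general n
end
end

section
/- Suppose λ1 = n for a natural number n (cast to ℂ in the operators) and λ2 ∈ ℂ. Then the generator v = x^{n+1} ∈ R of the s1-twisted Verma module M^{s1}(λ) is annihilated by the twisted annihilator ideal: E2 v = 0, E12 v = 0, E1^{n+2} v = 0, F1(E1 v) = 0, H1 v = −(n+2)·v and H2 v = (n+λ2+1)·v. -/
open MvPolynomial LieAlgebra.SpecialLinear

noncomputable section

lemma D0_pow (k : ℕ) : D 0 (X 0 ^ k : R3) = (k : ℂ) • X 0 ^ (k - 1) := by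
  simp [D, pderiv_pow, pderiv_X_self, Algebra.smul_def]

lemma D1_pow (k : ℕ) : D 1 (X 0 ^ k : R3) = 0 := by
  simp [D, pderiv_pow, pderiv_X]

lemma D2_pow (k : ℕ) : D 2 (X 0 ^ k : R3) = 0 := by
  simp [D, pderiv_pow, pderiv_X]

lemma E1_pow (k : ℕ) : E1 (X 0 ^ k : R3) = (k : ℂ) • X 0 ^ (k - 1) := by
  simp [E1, D0_pow, D1_pow]

lemma E1_nilp (k : ℕ) : (E1 ^ (k + 1)) (X 0 ^ k : R3) = 0 := by
  induction k with
  | zero => simp [pow_one, pow_zero]; simpa using E1_pow 0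
  | succ k ih =>
      rw [pow_succ, Module.End.mul_apply, E1_pow]
      simp [ih]

/-- For `λ1 = n ∈ ℕ`, the generator `v = x^{n+1}` of the `s1`-twisted Verma module
`M^{s1}(λ)` is annihilated by the twisted annihilator ideal:
`E2 v = 0`, `E12 v = 0`, `E1^{n+2} v = 0`, `F1(E1 v) = 0`,
`H1 v = −(n+2)·v` and `H2 v = (n+λ2+1)·v`. -/
theorem s1_twisted_generator_annihilator (n : ℕ) (lam2 : ℂ) :
    E2 (n : ℂ) lam2 (X 0 ^ (n + 1)) = 0 ∧
    E12 (n : ℂ) lam2 (X 0 ^ (n + 1)) = 0 ∧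
    (E1 ^ (n + 2)) (X 0 ^ (n + 1) : R3) = 0 ∧
    F1 (n : ℂ) (E1 (X 0 ^ (n + 1))) = 0 ∧
    H1 (n : ℂ) (X 0 ^ (n + 1)) = (-((n : ℂ) + 2)) • X 0 ^ (n + 1) ∧
    H2 lam2 (X 0 ^ (n + 1)) = ((n : ℂ) + lam2 + 1) • X 0 ^ (n + 1) := by
  refine ⟨?_, ?_, ?_, ?_, ?_, ?_⟩
  · simp [E2, Module.End.mul_apply, D1_pow, D2_pow]
  · simp [E12, Module.End.mul_apply, D1_pow, D2_pow]
  · simpa using E1_nilp (n + 1)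
  · rw [E1_pow]
    simp only [Nat.add_sub_cancel, map_smul, F1, LinearMap.sub_apply, Module.End.mul_apply,
      LinearMap.smul_apply, Module.End.one_apply, D0_pow, D1_pow, D2_pow, ξ,
      LinearMap.mulLeft_apply, map_smul, map_zero, smul_zero, mul_zero, zero_sub]
    cases n with
    | zero => simp
    | succ m =>
        simp only [Nat.add_sub_cancel, mul_smul_comm, ← pow_succ']
        simp [sub_self]
  · simp only [H1, LinearMap.add_apply, LinearMap.sub_apply, Module.End.mul_apply,
      LinearMap.smul_apply, Module.End.one_apply, D0_pow, D1_pow, D2_pow, ξ,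
      LinearMap.mulLeft_apply, Nat.add_sub_cancel, map_zero, mul_zero, smul_zero]
    rw [mul_smul_comm, ← pow_succ']
    push_cast
    module
  · simp only [H2, LinearMap.add_apply, LinearMap.sub_apply, Module.End.mul_apply,
      LinearMap.smul_apply, Module.End.one_apply, D0_pow, D1_pow, D2_pow, ξ,
      LinearMap.mulLeft_apply, Nat.add_sub_cancel, map_zero, mul_zero, smul_zero]
    rw [mul_smul_comm, ← pow_succ']
    push_cast
    module
end
end

section
/- Suppose λ2 = m for a natural number m (cast to ℂ in the operators) and λ1 ∈ ℂ. Then the vector v = ξ3^{m+1} ∈ R is a singular vector of the s1-twisted Verma module M^{s1}(λ) of weight (λ1+m+1, −m−2): it satisfies E1 v = 0, E2 v = 0, E12 v = 0, H1 v = (λ1+m+1)·v and H2 v = (−m−2)·v. -/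
open MvPolynomial LieAlgebra.SpecialLinear

noncomputable section

/-- For `λ2 = m ∈ ℕ`, the vector `v = ξ3^{m+1}` is a singular vector of the `s1`-twisted
Verma module `M^{s1}(λ)` of weight `(λ1+m+1, −m−2)`. -/
theorem s1_twisted_singular_vector_xi3 (lam1 : ℂ) (m : ℕ) :
    E1 (X 2 ^ (m + 1) : R3) = 0 ∧
    E2 lam1 (m : ℂ) (X 2 ^ (m + 1)) = 0 ∧
    E12 lam1 (m : ℂ) (X 2 ^ (m + 1)) = 0 ∧
    H1 lam1 (X 2 ^ (m + 1)) = (lam1 + (m : ℂ) + 1) • X 2 ^ (m + 1) ∧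
    H2 (m : ℂ) (X 2 ^ (m + 1)) = (-(m : ℂ) - 2) • X 2 ^ (m + 1) := by
  have hD0 : D 0 (X 2 ^ (m + 1) : R3) = 0 := by
    simp [D, pderiv_pow, pderiv_X, Pi.single_apply]
  have hD1 : D 1 (X 2 ^ (m + 1) : R3) = 0 := by
    simp [D, pderiv_pow, pderiv_X, Pi.single_apply]
  have hD2 : D 2 (X 2 ^ (m + 1) : R3) = ((m : ℂ) + 1) • X 2 ^ m := by
    simp [D, pderiv_pow, pderiv_X, Pi.single_apply, smul_eq_C_mul]
  have hD2' : D 2 (X 2 ^ m : R3) = (m : ℂ) • X 2 ^ (m - 1) := by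
    simp [D, pderiv_pow, pderiv_X, Pi.single_apply, smul_eq_C_mul]
  have hD0' : D 0 (X 2 ^ m : R3) = 0 := by
    simp [D, pderiv_pow, pderiv_X, Pi.single_apply]
  have hD1' : D 1 (X 2 ^ m : R3) = 0 := by
    simp [D, pderiv_pow, pderiv_X, Pi.single_apply]
  have hξ2 : ξ 2 (X 2 ^ m : R3) = X 2 ^ (m + 1) := by
    simp [ξ, pow_succ, mul_comm]
  have hξ2' : ξ 2 (X 2 ^ (m-1) : R3) = X 2 ^ (m-1+1) := by
    simp [ξ, pow_succ, mul_comm]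
  refine ⟨?_, ?_, ?_, ?_, ?_⟩
  · simp [E1, Module.End.mul_apply, hD0, hD1]
  · by_cases hm : m = 0
    · subst hm
      simp [E2, Module.End.mul_apply, D, ξ, pderiv_X, Pi.single_apply]
    · have hm1 : m - 1 + 1 = m := Nat.succ_pred_eq_of_pos (Nat.pos_of_ne_zero hm)
      simp [E2, Module.End.mul_apply, hD0, hD1, hD2, hD0', hD1', hD2', hξ2, hξ2', hm1]
  · simp [E12, Module.End.mul_apply, hD0, hD1, hD2, hD0', hD1', hD2']
  · simp [H1, Module.End.mul_apply, hD0, hD1, hD2, hξ2]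
    module
  · simp [H2, Module.End.mul_apply, hD0, hD1, hD2, hξ2]
    module
end
end

section
/- Let λ1, λ2 ∈ ℕ (cast to ℂ in the operators). Then the vector v = (x·ξ3 − 2ξ2)^{λ1+λ2+2} ∈ R is a singular vector of the s1-twisted Verma module M^{s1}(λ) of weight (−λ2−2, −λ1−2): it satisfies E1 v = 0, E2 v = 0, E12 v = 0, H1 v = (−λ2−2)·v and H2 v = (−λ1−2)·v. -/
open MvPolynomial LieAlgebra.SpecialLinear

noncomputable section

/-! ### Auxiliary lemmas for the singular vector computation -/

lemma SV.pderiv_two (i : Fin 3) : pderiv i (2:R3) = 0 := by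
  rw [show (2:R3) = C (2:ℂ) from (map_ofNat C 2).symm, pderiv_C]

lemma SV.nat_smul (m : ℕ) (q : R3) : ((m : ℂ)) • q = m • q := Nat.cast_smul_eq_nsmul ..

lemma SV.hD0 (m : ℕ) : pderiv 0 ((X 0 * X 2 - 2 * X 1 : R3)^(m+1)) =
    ((m:ℂ)+1) • ((X 0 * X 2 - 2 * X 1 : R3)^m * X 2) := by
  rw [Derivation.leibniz_pow]
  simp only [Nat.add_sub_cancel, map_sub, Derivation.leibniz, pderiv_X, SV.pderiv_two,
    Pi.single_eq_same, Pi.single_eq_of_ne (by decide : (0:Fin 3) ≠ 2),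
    Pi.single_eq_of_ne (by decide : (0:Fin 3) ≠ 1)]
  rw [show ((m:ℂ)+1) = ((m+1 : ℕ) : ℂ) by push_cast; ring, SV.nat_smul]
  simp [smul_eq_mul]

lemma SV.hD1 (m : ℕ) : pderiv 1 ((X 0 * X 2 - 2 * X 1 : R3)^(m+1)) =
    (-2*((m:ℂ)+1)) • ((X 0 * X 2 - 2 * X 1 : R3)^m) := by
  rw [Derivation.leibniz_pow]
  simp only [Nat.add_sub_cancel, map_sub, Derivation.leibniz, pderiv_X, SV.pderiv_two,
    Pi.single_eq_same, Pi.single_eq_of_ne (by decide : (1:Fin 3) ≠ 2),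
    Pi.single_eq_of_ne (by decide : (1:Fin 3) ≠ 0)]
  rw [show (-2*((m:ℂ)+1)) • ((X 0 * X 2 - 2 * X 1 : R3)^m)
      = (-2 : ℂ) • (((m+1:ℕ):ℂ)) • ((X 0 * X 2 - 2 * X 1 : R3)^m) by
    rw [smul_smul]; push_cast; ring]
  rw [SV.nat_smul]
  simp only [smul_eq_mul, smul_zero, mul_zero, zero_add, smul_smul, nsmul_eq_mul]
  push_cast
  ring_nf
  simp [MvPolynomial.smul_eq_C_mul, map_ofNat]
  ring

lemma SV.hD2 (m : ℕ) : pderiv 2 ((X 0 * X 2 - 2 * X 1 : R3)^(m+1)) =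
    ((m:ℂ)+1) • ((X 0 * X 2 - 2 * X 1 : R3)^m * X 0) := by
  rw [Derivation.leibniz_pow]
  simp only [Nat.add_sub_cancel, map_sub, Derivation.leibniz, pderiv_X, SV.pderiv_two,
    Pi.single_eq_same, Pi.single_eq_of_ne (by decide : (2:Fin 3) ≠ 0),
    Pi.single_eq_of_ne (by decide : (2:Fin 3) ≠ 1)]
  rw [show ((m:ℂ)+1) = ((m+1 : ℕ) : ℂ) by push_cast; ring, SV.nat_smul]
  simp [smul_eq_mul]
  try ring

lemma SV.mul2 (x : R3) : x * 2 = (2:ℂ) • x := by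
  rw [MvPolynomial.smul_eq_C_mul, map_ofNat, mul_comm]
lemma SV.mul4 (x : R3) : x * 4 = (4:ℂ) • x := by
  rw [MvPolynomial.smul_eq_C_mul, map_ofNat, mul_comm]
lemma SV.mul8 (x : R3) : x * 8 = (8:ℂ) • x := by
  rw [MvPolynomial.smul_eq_C_mul, map_ofNat, mul_comm]
lemma SV.mul16 (x : R3) : x * 16 = (16:ℂ) • x := by
  rw [MvPolynomial.smul_eq_C_mul, map_ofNat, mul_comm]
lemma SV.twomul (x : R3) : 2 * x = (2:ℂ) • x := by
  rw [MvPolynomial.smul_eq_C_mul, map_ofNat]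
lemma SV.fourmul (x : R3) : 4 * x = (4:ℂ) • x := by
  rw [MvPolynomial.smul_eq_C_mul, map_ofNat]

set_option maxHeartbeats 2000000 in
/-- For `λ1, λ2 ∈ ℕ`, the vector `v = (x·ξ3 − 2ξ2)^{λ1+λ2+2}` is a singular vector of the
`s1`-twisted Verma module `M^{s1}(λ)` of weight `(−λ2−2, −λ1−2)`. -/
theorem s1_twisted_singular_vector_long (lam1 lam2 : ℕ) :
    E1 ((X 0 * X 2 - 2 * X 1) ^ (lam1 + lam2 + 2) : R3) = 0 ∧
    E2 (lam1 : ℂ) (lam2 : ℂ) ((X 0 * X 2 - 2 * X 1) ^ (lam1 + lam2 + 2)) = 0 ∧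
    E12 (lam1 : ℂ) (lam2 : ℂ) ((X 0 * X 2 - 2 * X 1) ^ (lam1 + lam2 + 2)) = 0 ∧
    H1 (lam1 : ℂ) ((X 0 * X 2 - 2 * X 1) ^ (lam1 + lam2 + 2)) =
      (-(lam2 : ℂ) - 2) • (X 0 * X 2 - 2 * X 1) ^ (lam1 + lam2 + 2) ∧
    H2 (lam2 : ℂ) ((X 0 * X 2 - 2 * X 1) ^ (lam1 + lam2 + 2)) =
      (-(lam1 : ℂ) - 2) • (X 0 * X 2 - 2 * X 1) ^ (lam1 + lam2 + 2) := by
  rw [show lam1+lam2+2 = lam1+lam2+1+1 from rfl]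
  refine ⟨?_, ?_, ?_, ?_, ?_⟩
  · simp only [E1, D, ξ, LinearMap.add_apply, LinearMap.sub_apply, LinearMap.smul_apply,
      Module.End.mul_apply, LinearMap.mulLeft_apply, Module.End.one_apply, Derivation.coeFn_coe]
    simp only [SV.hD0 (lam1+lam2+1), SV.hD1 (lam1+lam2+1), SV.hD2 (lam1+lam2+1), map_smul,
      Derivation.map_smul, map_add, map_sub, map_neg, smul_sub, smul_add, smul_neg,
      Derivation.leibniz, SV.hD0 (lam1+lam2), SV.hD1 (lam1+lam2), SV.hD2 (lam1+lam2), pderiv_X,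
      Pi.single_eq_same,
      Pi.single_eq_of_ne (by decide : (0:Fin 3) ≠ 2), Pi.single_eq_of_ne (by decide : (0:Fin 3) ≠ 1),
      Pi.single_eq_of_ne (by decide : (1:Fin 3) ≠ 2), Pi.single_eq_of_ne (by decide : (1:Fin 3) ≠ 0),
      Pi.single_eq_of_ne (by decide : (2:Fin 3) ≠ 0), Pi.single_eq_of_ne (by decide : (2:Fin 3) ≠ 1)]
    simp only [pow_succ, smul_eq_mul, nsmul_eq_mul, mul_zero, zero_mul, smul_zero, add_zero,
      zero_add, sub_zero, zero_sub, neg_neg]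
    generalize ((X 0 * X 2 - 2 * X 1 : R3)^(lam1+lam2)) = q
    simp only [mul_sub, sub_mul, mul_add, add_mul, smul_sub, smul_add, smul_smul,
      mul_smul_comm, smul_mul_assoc, neg_mul, mul_neg, smul_neg, neg_neg]
    ring_nf
    simp only [SV.mul2, SV.mul4, SV.mul8, SV.mul16, SV.twomul, SV.fourmul, smul_smul,
      smul_mul_assoc, mul_smul_comm]
    match_scalars <;> (push_cast; ring)
  · simp only [E2, D, ξ, LinearMap.add_apply, LinearMap.sub_apply, LinearMap.smul_apply,
      Module.End.mul_apply, LinearMap.mulLeft_apply, Module.End.one_apply, Derivation.coeFn_coe]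
    simp only [SV.hD0 (lam1+lam2+1), SV.hD1 (lam1+lam2+1), SV.hD2 (lam1+lam2+1), map_smul,
      Derivation.map_smul, map_add, map_sub, map_neg, smul_sub, smul_add, smul_neg,
      Derivation.leibniz, SV.hD0 (lam1+lam2), SV.hD1 (lam1+lam2), SV.hD2 (lam1+lam2), pderiv_X,
      Pi.single_eq_same,
      Pi.single_eq_of_ne (by decide : (0:Fin 3) ≠ 2), Pi.single_eq_of_ne (by decide : (0:Fin 3) ≠ 1),
      Pi.single_eq_of_ne (by decide : (1:Fin 3) ≠ 2), Pi.single_eq_of_ne (by decide : (1:Fin 3) ≠ 0),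
      Pi.single_eq_of_ne (by decide : (2:Fin 3) ≠ 0), Pi.single_eq_of_ne (by decide : (2:Fin 3) ≠ 1)]
    simp only [pow_succ, smul_eq_mul, nsmul_eq_mul, mul_zero, zero_mul, smul_zero, add_zero,
      zero_add, sub_zero, zero_sub, neg_neg]
    generalize ((X 0 * X 2 - 2 * X 1 : R3)^(lam1+lam2)) = q
    simp only [mul_sub, sub_mul, mul_add, add_mul, smul_sub, smul_add, smul_smul,
      mul_smul_comm, smul_mul_assoc, neg_mul, mul_neg, smul_neg, neg_neg]
    ring_nf
    simp only [SV.mul2, SV.mul4, SV.mul8, SV.mul16, SV.twomul, SV.fourmul, smul_smul,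
      smul_mul_assoc, mul_smul_comm]
    match_scalars <;> (push_cast; ring)
  · simp only [E12, D, ξ, LinearMap.add_apply, LinearMap.sub_apply, LinearMap.smul_apply,
      Module.End.mul_apply, LinearMap.mulLeft_apply, Module.End.one_apply, Derivation.coeFn_coe]
    simp only [SV.hD0 (lam1+lam2+1), SV.hD1 (lam1+lam2+1), SV.hD2 (lam1+lam2+1), map_smul,
      Derivation.map_smul, map_add, map_sub, map_neg, smul_sub, smul_add, smul_neg,
      Derivation.leibniz, SV.hD0 (lam1+lam2), SV.hD1 (lam1+lam2), SV.hD2 (lam1+lam2), pderiv_X,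
      Pi.single_eq_same,
      Pi.single_eq_of_ne (by decide : (0:Fin 3) ≠ 2), Pi.single_eq_of_ne (by decide : (0:Fin 3) ≠ 1),
      Pi.single_eq_of_ne (by decide : (1:Fin 3) ≠ 2), Pi.single_eq_of_ne (by decide : (1:Fin 3) ≠ 0),
      Pi.single_eq_of_ne (by decide : (2:Fin 3) ≠ 0), Pi.single_eq_of_ne (by decide : (2:Fin 3) ≠ 1)]
    simp only [pow_succ, smul_eq_mul, nsmul_eq_mul, mul_zero, zero_mul, smul_zero, add_zero,
      zero_add, sub_zero, zero_sub, neg_neg]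
    generalize ((X 0 * X 2 - 2 * X 1 : R3)^(lam1+lam2)) = q
    simp only [mul_sub, sub_mul, mul_add, add_mul, smul_sub, smul_add, smul_smul,
      mul_smul_comm, smul_mul_assoc, neg_mul, mul_neg, smul_neg, neg_neg]
    ring_nf
    simp only [SV.mul2, SV.mul4, SV.mul8, SV.mul16, SV.twomul, SV.fourmul, smul_smul,
      smul_mul_assoc, mul_smul_comm]
    match_scalars <;> (push_cast; ring)
  · simp only [H1, D, ξ, LinearMap.add_apply, LinearMap.sub_apply, LinearMap.smul_apply,
      Module.End.mul_apply, LinearMap.mulLeft_apply, Module.End.one_apply, Derivation.coeFn_coe]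
    simp only [SV.hD0 (lam1+lam2+1), SV.hD1 (lam1+lam2+1), SV.hD2 (lam1+lam2+1), map_smul,
      Derivation.map_smul, map_add, map_sub, map_neg, smul_sub, smul_add, smul_neg,
      Derivation.leibniz, SV.hD0 (lam1+lam2), SV.hD1 (lam1+lam2), SV.hD2 (lam1+lam2), pderiv_X,
      Pi.single_eq_same,
      Pi.single_eq_of_ne (by decide : (0:Fin 3) ≠ 2), Pi.single_eq_of_ne (by decide : (0:Fin 3) ≠ 1),
      Pi.single_eq_of_ne (by decide : (1:Fin 3) ≠ 2), Pi.single_eq_of_ne (by decide : (1:Fin 3) ≠ 0),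
      Pi.single_eq_of_ne (by decide : (2:Fin 3) ≠ 0), Pi.single_eq_of_ne (by decide : (2:Fin 3) ≠ 1)]
    simp only [pow_succ, smul_eq_mul, nsmul_eq_mul, mul_zero, zero_mul, smul_zero, add_zero,
      zero_add, sub_zero, zero_sub, neg_neg]
    generalize ((X 0 * X 2 - 2 * X 1 : R3)^(lam1+lam2)) = q
    simp only [mul_sub, sub_mul, mul_add, add_mul, smul_sub, smul_add, smul_smul,
      mul_smul_comm, smul_mul_assoc, neg_mul, mul_neg, smul_neg, neg_neg]
    ring_nf
    simp only [SV.mul2, SV.mul4, SV.mul8, SV.mul16, SV.twomul, SV.fourmul, smul_smul,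
      smul_mul_assoc, mul_smul_comm]
    match_scalars <;> (push_cast; ring)
  · simp only [H2, D, ξ, LinearMap.add_apply, LinearMap.sub_apply, LinearMap.smul_apply,
      Module.End.mul_apply, LinearMap.mulLeft_apply, Module.End.one_apply, Derivation.coeFn_coe]
    simp only [SV.hD0 (lam1+lam2+1), SV.hD1 (lam1+lam2+1), SV.hD2 (lam1+lam2+1), map_smul,
      Derivation.map_smul, map_add, map_sub, map_neg, smul_sub, smul_add, smul_neg,
      Derivation.leibniz, SV.hD0 (lam1+lam2), SV.hD1 (lam1+lam2), SV.hD2 (lam1+lam2), pderiv_X,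
      Pi.single_eq_same,
      Pi.single_eq_of_ne (by decide : (0:Fin 3) ≠ 2), Pi.single_eq_of_ne (by decide : (0:Fin 3) ≠ 1),
      Pi.single_eq_of_ne (by decide : (1:Fin 3) ≠ 2), Pi.single_eq_of_ne (by decide : (1:Fin 3) ≠ 0),
      Pi.single_eq_of_ne (by decide : (2:Fin 3) ≠ 0), Pi.single_eq_of_ne (by decide : (2:Fin 3) ≠ 1)]
    simp only [pow_succ, smul_eq_mul, nsmul_eq_mul, mul_zero, zero_mul, smul_zero, add_zero,
      zero_add, sub_zero, zero_sub, neg_neg]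
    generalize ((X 0 * X 2 - 2 * X 1 : R3)^(lam1+lam2)) = q
    simp only [mul_sub, sub_mul, mul_add, add_mul, smul_sub, smul_add, smul_smul,
      mul_smul_comm, smul_mul_assoc, neg_mul, mul_neg, smul_neg, neg_neg]
    ring_nf
    simp only [SV.mul2, SV.mul4, SV.mul8, SV.mul16, SV.twomul, SV.fourmul, smul_smul,
      smul_mul_assoc, mul_smul_comm]
    match_scalars <;> (push_cast; ring)
end
end

section
/- For all λ1, λ2 ∈ ℂ and all natural numbers a, b, the polynomial v = ξ3^a·(x·ξ3 − 2ξ2)^b ∈ R is a simultaneous eigenvector of H1 and H2: H1 v = (λ1 + a − b)·v and H2 v = (λ2 − 2a − b)·v. Thus the space ℂ[ξ3, x·ξ3 − 2ξ2] of sl(2,ℂ)-singular vectors of the s1-twisted Verma module M^{s1}(λ) decomposes into weight spaces spanned by the monomials ξ3^a·(x·ξ3 − 2ξ2)^b. -/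
open MvPolynomial LieAlgebra.SpecialLinear

noncomputable section

/-- Each monomial `v = ξ3^a·(x·ξ3 − 2ξ2)^b` in the space `ℂ[ξ3, xξ3 − 2ξ2]` of
`sl(2,ℂ)`-singular vectors of the `s1`-twisted Verma module `M^{s1}(λ)` is a simultaneous
eigenvector of `H1` and `H2`, with `H1 v = (λ1 + a − b)·v` and `H2 v = (λ2 − 2a − b)·v`. -/
theorem s1_twisted_weights (lam1 lam2 : ℂ) (a b : ℕ) :
    H1 lam1 (X 2 ^ a * (X 0 * X 2 - 2 * X 1) ^ b) =
      (lam1 + (a : ℂ) - (b : ℂ)) • (X 2 ^ a * (X 0 * X 2 - 2 * X 1) ^ b) ∧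
    H2 lam2 (X 2 ^ a * (X 0 * X 2 - 2 * X 1) ^ b) =
      (lam2 - 2 * (a : ℂ) - (b : ℂ)) • (X 2 ^ a * (X 0 * X 2 - 2 * X 1) ^ b) := by
  set w : R3 := X 0 * X 2 - 2 * X 1 with hw
  have hd : ∀ i : Fin 3, (pderiv i) ((X 2 : R3) ^ a * w ^ b) =
      (a • ((X 2 : R3) ^ (a-1) * pderiv i (X 2))) * w ^ b
        + X 2 ^ a * (b • (w ^ (b-1) * pderiv i w)) := by
    intro i
    rw [Derivation.leibniz, (pderiv i).leibniz_pow, (pderiv i).leibniz_pow]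
    simp only [smul_eq_mul, nsmul_eq_mul]; ring
  have h2 : (2 : R3) = C 2 := (map_ofNat (C : ℂ →+* R3) 2).symm
  have d0w : (pderiv (R:=ℂ) 0) w = X 2 := by rw [hw, h2]; simp [pderiv_X]
  have d1w : (pderiv (R:=ℂ) 1) w = -2 := by rw [hw, h2]; simp [pderiv_X, h2]
  have d2w : (pderiv (R:=ℂ) 2) w = X 0 := by rw [hw, h2]; simp [pderiv_X]
  constructor <;>
  · simp only [H1, H2, ξ, D, LinearMap.add_apply, LinearMap.sub_apply, LinearMap.smul_apply,
      Module.End.mul_apply, LinearMap.mulLeft_apply, Module.End.one_apply,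
      Derivation.coeFn_coe, hd, d0w, d1w, d2w, pderiv_X]
    simp only [Pi.single_apply, smul_eq_C_mul, nsmul_eq_mul, map_add, map_sub, map_natCast,
      map_ofNat, map_neg, map_mul]
    cases a <;> cases b <;> push_cast <;> ring
end
end
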